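/- Limit-weight convergence of the unified QP to the safety-first hierarchy (first two stages): Let F ⊆ ℝ^m × ℝ × ℝ be a nonempty set of feasible triples (u, δ₁, δ₂), let H be an m×m positive semidefinite real matrix, k ∈ ℝ^m, and set g(u) = (u − k)ᵀ H (u − k). Suppose (u*, δ₁*, δ₂*) ∈ F satisfies (δ₂*)² ≤ δ₂² for every (u, δ₁, δ₂) ∈ F (the CBF slack is minimal in absolute value over F). For each q > 0 let (u_q, δ₁_q, δ₂_q) ∈ F be a minimizer over F of the weighted objective J_q(u, δ₁, δ₂) = g(u) + q δ₁² + q² δ₂². Then (i) (δ₂_q)² → (δ₂*)² as q → ∞, and (ii) limsup_{q→∞} (δ₁_q)² ≤ (δ₁*)². -/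

import Mathlib

open Filter Topology

/-!
Comparing the weighted minimizer with the hierarchical optimum `p*` gives
`g(u_q) + q δ₁_q² + q² δ₂_q² ≤ g(u*) + q (δ₁*)² + q² (δ₂*)²`. Dividing by `q²` and using
`g, δ₁² ≥ 0` squeezes `δ₂_q²` between `(δ₂*)²` and `(δ₂*)² + O(1/q)`. Since moreover
`(δ₂*)² ≤ δ₂_q²`, the `q²` terms can be dropped; dividing by `q` then gives
`δ₁_q² ≤ (δ₁*)² + g(u*)/q`.
-/

section WeightedCost

variable {α : Type*} (g a b : α → ℝ)

/-- The weighted objective `J_q`: in the CLF-CBF QP, `g` is the input cost and `a`, `b` are the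
squared CLF and CBF slacks. -/
def weightedCost (q : ℝ) (x : α) : ℝ :=
  g x + q * a x + q ^ 2 * b x

variable {g a b} {q : ℝ} {x y : α}

lemma le_add_of_weightedCost_le (hq : 0 < q) (hgx : 0 ≤ g x) (hax : 0 ≤ a x)
    (h : weightedCost g a b q x ≤ weightedCost g a b q y) :
    b x ≤ b y + (g y / q + a y) / q := by
  unfold weightedCost at h
  have hq2 : 0 < q ^ 2 := by positivity
  have hrhs : b y + (g y / q + a y) / q = (g y + q * a y + q ^ 2 * b y) / q ^ 2 := by
    field_simp
    ring
  rw [hrhs, le_div_iff₀ hq2]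
  nlinarith

lemma le_add_div_of_weightedCost_le (hq : 0 < q) (hgx : 0 ≤ g x) (hb : b y ≤ b x)
    (h : weightedCost g a b q x ≤ weightedCost g a b q y) :
    a x ≤ a y + g y / q := by
  unfold weightedCost at h
  have hbq : q ^ 2 * b y ≤ q ^ 2 * b x := by gcongr
  rw [add_div' _ _ _ hq.ne', le_div_iff₀ hq]
  nlinarith

variable {F : Set α} {sel : ℝ → α}

theorem tendsto_of_isMinOn_weightedCost (hg : ∀ x, 0 ≤ g x) (ha : ∀ x, 0 ≤ a x)
    (hy : y ∈ F) (hmin : IsMinOn b F y)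
    (hsel : ∀ q > 0, sel q ∈ F ∧ IsMinOn (weightedCost g a b q) F (sel q)) :
    Tendsto (fun q => b (sel q)) atTop (𝓝 (b y)) := by
  have hbound : Tendsto (fun q => b y + (g y / q + a y) / q) atTop (𝓝 (b y)) := by
    have hdecay : Tendsto (fun q => (g y / q + a y) / q) atTop (𝓝 0) :=
      ((tendsto_const_nhds.div_atTop tendsto_id).add_const _).div_atTop tendsto_id
    simpa using hdecay.const_add (b y)
  refine tendsto_of_tendsto_of_tendsto_of_le_of_le' tendsto_const_nhds hbound ?_ ?_
  · filter_upwards [eventually_gt_atTop 0] with q hq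
    exact isMinOn_iff.1 hmin _ (hsel q hq).1
  · filter_upwards [eventually_gt_atTop 0] with q hq
    exact le_add_of_weightedCost_le hq (hg _) (ha _) (isMinOn_iff.1 (hsel q hq).2 y hy)

theorem limsup_le_of_isMinOn_weightedCost (hg : ∀ x, 0 ≤ g x) (ha : ∀ x, 0 ≤ a x)
    (hy : y ∈ F) (hmin : IsMinOn b F y)
    (hsel : ∀ q > 0, sel q ∈ F ∧ IsMinOn (weightedCost g a b q) F (sel q)) :
    limsup (fun q => a (sel q)) atTop ≤ a y := by
  have hbound : Tendsto (fun q => a y + g y / q) atTop (𝓝 (a y)) := by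
    simpa using (tendsto_const_nhds.div_atTop tendsto_id).const_add (a y)
  rw [← hbound.limsup_eq]
  refine limsup_le_limsup ?_ (isCoboundedUnder_le_of_le atTop fun q => ha (sel q))
    hbound.isBoundedUnder_le
  filter_upwards [eventually_gt_atTop 0] with q hq
  exact le_add_div_of_weightedCost_le hq (hg _) (isMinOn_iff.1 hmin _ (hsel q hq).1)
    (isMinOn_iff.1 (hsel q hq).2 y hy)

end WeightedCost

theorem limit_weight_convergence_general
    (m : ℕ) (F : Set ((Fin m → ℝ) × ℝ × ℝ))
    (H : Matrix (Fin m) (Fin m) ℝ) (hH : H.PosSemidef) (k : Fin m → ℝ)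
    (pstar : (Fin m → ℝ) × ℝ × ℝ) (hstar : pstar ∈ F)
    (hmin : ∀ p ∈ F, pstar.2.2 ^ 2 ≤ p.2.2 ^ 2)
    (sel : ℝ → (Fin m → ℝ) × ℝ × ℝ)
    (hselF : ∀ q > (0 : ℝ), sel q ∈ F)
    (hselmin : ∀ q > (0 : ℝ), ∀ p ∈ F,
      dotProduct ((sel q).1 - k) (H.mulVec ((sel q).1 - k))
          + q * (sel q).2.1 ^ 2 + q ^ 2 * (sel q).2.2 ^ 2 ≤
        dotProduct (p.1 - k) (H.mulVec (p.1 - k))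
          + q * p.2.1 ^ 2 + q ^ 2 * p.2.2 ^ 2) :
    Tendsto (fun q => (sel q).2.2 ^ 2) atTop (nhds (pstar.2.2 ^ 2)) ∧
    limsup (fun q => (sel q).2.1 ^ 2) atTop ≤ pstar.2.1 ^ 2 := by
  let g : (Fin m → ℝ) × ℝ × ℝ → ℝ := fun p => dotProduct (p.1 - k) (H.mulVec (p.1 - k))
  have hg (p : (Fin m → ℝ) × ℝ × ℝ) : 0 ≤ g p := by
    simpa only [star_trivial] using hH.dotProduct_mulVec_nonneg (p.1 - k)
  have ha (p : (Fin m → ℝ) × ℝ × ℝ) : 0 ≤ p.2.1 ^ 2 := sq_nonneg _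
  have hsel : ∀ q > 0, sel q ∈ F ∧
      IsMinOn (weightedCost g (fun p => p.2.1 ^ 2) (fun p => p.2.2 ^ 2) q) F (sel q) :=
    fun q hq => ⟨hselF q hq, isMinOn_iff.2 (hselmin q hq)⟩
  have hcbf := tendsto_of_isMinOn_weightedCost hg ha hstar (isMinOn_iff.2 hmin) hsel
  have hclf := limsup_le_of_isMinOn_weightedCost hg ha hstar (isMinOn_iff.2 hmin) hsel
  exact ⟨hcbf, hclf⟩

/-- Limit-weight convergence of the unified QP to the safety-first hierarchy
(first two stages): minimizers of `g(u) + q δ₁² + q² δ₂²` over the feasible set `F`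
recover the minimal CBF slack (in square) in the limit `q → ∞`, and the limsup of the
squared CLF slacks is bounded by the hierarchical value `(δ₁*)²`. -/
theorem limit_weight_convergence
    (m : ℕ) (F : Set ((Fin m → ℝ) × ℝ × ℝ)) (hF : F.Nonempty)
    (H : Matrix (Fin m) (Fin m) ℝ) (hH : H.PosSemidef) (k : Fin m → ℝ)
    (pstar : (Fin m → ℝ) × ℝ × ℝ) (hstar : pstar ∈ F)
    (hmin : ∀ p ∈ F, pstar.2.2 ^ 2 ≤ p.2.2 ^ 2)
    (sel : ℝ → (Fin m → ℝ) × ℝ × ℝ)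
    (hselF : ∀ q > (0 : ℝ), sel q ∈ F)
    (hselmin : ∀ q > (0 : ℝ), ∀ p ∈ F,
      dotProduct ((sel q).1 - k) (H.mulVec ((sel q).1 - k))
          + q * (sel q).2.1 ^ 2 + q ^ 2 * (sel q).2.2 ^ 2 ≤
        dotProduct (p.1 - k) (H.mulVec (p.1 - k))
          + q * p.2.1 ^ 2 + q ^ 2 * p.2.2 ^ 2) :
    Tendsto (fun q => (sel q).2.2 ^ 2) atTop (nhds (pstar.2.2 ^ 2)) ∧
    limsup (fun q => (sel q).2.1 ^ 2) atTop ≤ pstar.2.1 ^ 2 :=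
  limit_weight_convergence_general m F H hH k pstar hstar hmin sel hselF hselmin
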